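/- arXiv:2111.07884 — 3 statements merged into one kernel-verified Lean document; each statement's English description precedes it below -/
import Mathlib

section
/- Let r divide k, d ≥ k, ρ ∈ [0,1), β ≥ 0 and α_1 = ρα. Define b_{s−1} = ((d−k)/r + s)·β/(1−ρ) for s = 1,…,k/r. Then for α ∈ (b_{i−1}, b_i] with 1 ≤ i ≤ k/r − 1, the capacity C(α) = Σ_{s=1}^{k/r} min(rρα + (d − r(s−1))β, rα) equals (k − i r (1−ρ))α + (1−ρ) Σ_{j=0}^{i−1} r b_j; for α ≤ b_0 it equals kα; and for α > b_{k/r−1} it equals kρα + (1−ρ)Σ_{j=0}^{k/r−1} r b_j. -/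
/-! Since `r(1-ρ) b_j = (d - r(k/r - 1 - j))β`, summing in reverse order gives
`C(α) = kρα + r(1-ρ) Σ_{j<k/r} min(b_j, α)`. The breakpoints increase, so for `α ∈ (b_{i-1}, b_i]`
the first `i` minima are `b_j` and the others are `α`. -/

open Finset

theorem Finset.sum_range_min_eq_add_nsmul {M : Type*} [AddCommMonoid M] [LinearOrder M]
    (b : ℕ → M) (α : M) {i m : ℕ} (him : i ≤ m) (hlo : ∀ j < i, b j ≤ α)
    (hhi : ∀ j, i ≤ j → j < m → α ≤ b j) :
    ∑ j ∈ range m, min (b j) α = ∑ j ∈ range i, b j + (m - i) • α := by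
  rw [← sum_range_add_sum_Ico _ him]
  congr 1
  · exact sum_congr rfl fun j hj => min_eq_left (hlo j (mem_range.1 hj))
  · rw [sum_congr rfl fun j hj => min_eq_right (hhi j (mem_Ico.1 hj).1 (mem_Ico.1 hj).2),
      sum_const, Nat.card_Ico]

namespace MinCut

variable (k r d : ℕ) (ρ β : ℝ)

noncomputable def breakpoint (j : ℕ) : ℝ := (((d : ℝ) - k) / r + (j + 1)) * β / (1 - ρ)

noncomputable def capacity (α : ℝ) : ℝ := ∑ s ∈ range (k / r),
  min ((r : ℝ) * (ρ * α) + ((d : ℝ) - r * s) * β) ((r : ℝ) * α)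

variable {k r d ρ β}

theorem breakpoint_monotone (hρ1 : ρ < 1) (hβ : 0 ≤ β) : Monotone (breakpoint k r d ρ β) := by
  intro i j hij
  have : 0 < 1 - ρ := by linarith
  unfold breakpoint
  gcongr

theorem capacity_eq_sum_min_breakpoint (hr : 1 ≤ r) (hrk : r ∣ k) (hρ1 : ρ < 1) (α : ℝ) :
    capacity k r d ρ β α =
      k * ρ * α + r * (1 - ρ) * ∑ j ∈ range (k / r), min (breakpoint k r d ρ β j) α := by
  obtain ⟨m, rfl⟩ := hrk
  have hr0 : (r : ℝ) ≠ 0 := by positivity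
  have hρ : (1 : ℝ) - ρ ≠ 0 := by linarith
  have hterm : ∀ j ∈ range m, min ((r : ℝ) * (ρ * α) + ((d : ℝ) - r * (m - 1 - j : ℕ)) * β)
      ((r : ℝ) * α) = r * (ρ * α) + r * (1 - ρ) * min (breakpoint (r * m) r d ρ β j) α := by
    intro j hj
    have hj := mem_range.1 hj
    rw [mul_min_of_nonneg _ _ (by positivity), ← min_add_add_left]
    congr 1
    · rw [Nat.cast_sub (by omega), Nat.cast_sub (by omega), breakpoint]
      field_simp
      push_cast
      ring
    · ring
  unfold capacity
  rw [Nat.mul_div_cancel_left m (by omega), ← sum_range_reflect, sum_congr rfl hterm,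
    sum_add_distrib, sum_const, card_range, nsmul_eq_mul, ← mul_sum]
  push_cast
  ring

theorem capacity_eq (hr : 1 ≤ r) (hrk : r ∣ k) (hρ1 : ρ < 1) {i : ℕ} (hi : i ≤ k / r) {α : ℝ}
    (hlo : ∀ j < i, breakpoint k r d ρ β j ≤ α)
    (hhi : ∀ j, i ≤ j → j < k / r → α ≤ breakpoint k r d ρ β j) :
    capacity k r d ρ β α = ((k : ℝ) - i * r * (1 - ρ)) * α +
      (1 - ρ) * ∑ j ∈ range i, (r : ℝ) * breakpoint k r d ρ β j := by
  have hk : (r : ℝ) * (k / r : ℕ) = k := by exact_mod_cast Nat.mul_div_cancel' hrk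
  rw [capacity_eq_sum_min_breakpoint hr hrk hρ1, sum_range_min_eq_add_nsmul _ _ hi hlo hhi,
    nsmul_eq_mul, Nat.cast_sub hi, ← mul_sum]
  linear_combination (1 - ρ) * α * hk

end MinCut

theorem mincut_capacity_piecewise_general
    (k r d : ℕ) (hr : 1 ≤ r) (hrk : r ∣ k)
    (ρ β : ℝ) (hρ1 : ρ < 1) (hβ : 0 ≤ β) :
    let b : ℕ → ℝ := fun j => (((d : ℝ) - k) / r + (j + 1)) * β / (1 - ρ)
    let C : ℝ → ℝ := fun α => ∑ s ∈ Finset.range (k / r),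
      min ((r : ℝ) * (ρ * α) + ((d : ℝ) - r * s) * β) ((r : ℝ) * α)
    (∀ α : ℝ, α ≤ b 0 → C α = (k : ℝ) * α) ∧
    (∀ i ∈ Finset.Icc 1 (k / r - 1), ∀ α : ℝ, b (i - 1) < α → α ≤ b i →
      C α = ((k : ℝ) - i * r * (1 - ρ)) * α +
            (1 - ρ) * ∑ j ∈ Finset.range i, (r : ℝ) * b j) ∧
    (∀ α : ℝ, b (k / r - 1) < α →
      C α = (k : ℝ) * ρ * α + (1 - ρ) * ∑ j ∈ Finset.range (k / r), (r : ℝ) * b j) := by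
  intro b C
  have hb : Monotone b := MinCut.breakpoint_monotone hρ1 hβ
  have hC : ∀ {i}, i ≤ k / r → ∀ {α}, (∀ j < i, b j ≤ α) → (∀ j, i ≤ j → j < k / r → α ≤ b j) →
      C α = ((k : ℝ) - i * r * (1 - ρ)) * α + (1 - ρ) * ∑ j ∈ range i, (r : ℝ) * b j :=
    MinCut.capacity_eq hr hrk hρ1
  refine ⟨fun α hα => ?_, fun i hi α hlo hhi => ?_, fun α hlo => ?_⟩
  · simpa using hC (Nat.zero_le _) (by simp) fun j _ _ => hα.trans (hb (Nat.zero_le j))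
  · have := mem_Icc.1 hi
    exact hC (by omega) (fun j hj => (hb (by omega)).trans hlo.le) fun j hj _ => hhi.trans (hb hj)
  · have hk : ((k / r : ℕ) : ℝ) * r = k := by exact_mod_cast Nat.div_mul_cancel hrk
    rw [hC le_rfl (fun j hj => (hb (by omega)).trans hlo.le) (by omega)]
    linear_combination -(1 - ρ) * α * hk

/-- Explicit piecewise-linear form of the min-cut capacity
`C(α) = Σ_{s=1}^{k/r} min(rρα + (d − r(s−1))β, rα)` with breakpoints
`b_{s−1} = ((d−k)/r + s)·β/(1−ρ)`: it equals `kα` for `α ≤ b_0`, equals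
`(k − ir(1−ρ))α + (1−ρ)Σ_{j=0}^{i−1} r b_j` on `(b_{i−1}, b_i]` for
`1 ≤ i ≤ k/r − 1`, and equals `kρα + (1−ρ)Σ_{j=0}^{k/r−1} r b_j` for
`α > b_{k/r−1}`. -/
theorem mincut_capacity_piecewise
    (k r d : ℕ) (hr : 1 ≤ r) (hrk : r ∣ k) (hk : 1 ≤ k) (hkd : k ≤ d)
    (ρ β : ℝ) (hρ0 : 0 ≤ ρ) (hρ1 : ρ < 1) (hβ : 0 ≤ β) :
    let b : ℕ → ℝ := fun j => (((d : ℝ) - k) / r + (j + 1)) * β / (1 - ρ)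
    let C : ℝ → ℝ := fun α => ∑ s ∈ Finset.range (k / r),
      min ((r : ℝ) * (ρ * α) + ((d : ℝ) - r * s) * β) ((r : ℝ) * α)
    (∀ α : ℝ, α ≤ b 0 → C α = (k : ℝ) * α) ∧
    (∀ i ∈ Finset.Icc 1 (k / r - 1), ∀ α : ℝ, b (i - 1) < α → α ≤ b i →
      C α = ((k : ℝ) - i * r * (1 - ρ)) * α +
            (1 - ρ) * ∑ j ∈ Finset.range i, (r : ℝ) * b j) ∧
    (∀ α : ℝ, b (k / r - 1) < α →
      C α = (k : ℝ) * ρ * α + (1 - ρ) * ∑ j ∈ Finset.range (k / r), (r : ℝ) * b j) :=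
  mincut_capacity_piecewise_general k r d hr hrk ρ β hρ1 hβ
end

section
/- (MSR point) Under the cut-set constraint Σ_{s=1}^{k/r} min(rρα + (d − r(s−1))β, rα) ≥ M with r | k, d ≥ k, ρ ∈ [0,1), the minimum feasible storage is α = M/k, and at this storage the minimum feasible total repair bandwidth γ = dβ equals M r d (1−ρ) / (k(d − k + r)). -/
set_option maxHeartbeats 1000000 in


/-- MSR point: under the cut-set constraint
`Σ_{s=1}^{k/r} min(rρα + (d − r(s−1))β, rα) ≥ M`, (i) feasibility forces
`α ≥ M/k`, and (ii) at `α = M/k` the least feasible total repair bandwidth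
`γ = dβ` is `M r d (1−ρ)/(k(d − k + r))`. -/
theorem MSR_point
    (k r d : ℕ) (M : ℝ) (hM : 0 < M)
    (hr : 1 ≤ r) (hrk : r ∣ k) (hk : 1 ≤ k) (hkd : k ≤ d)
    (ρ : ℝ) (hρ0 : 0 ≤ ρ) (hρ1 : ρ < 1) :
    let C : ℝ → ℝ → ℝ := fun α β => ∑ s ∈ Finset.range (k / r),
      min ((r : ℝ) * (ρ * α) + ((d : ℝ) - r * s) * β) ((r : ℝ) * α)
    (∀ α β : ℝ, 0 ≤ β → M ≤ C α β → M / k ≤ α) ∧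
    IsLeast {γ : ℝ | ∃ β : ℝ, 0 ≤ β ∧ γ = d * β ∧ M ≤ C (M / k) β}
      (M * r * d * (1 - ρ) / (k * ((d : ℝ) - k + r))) := by
  intro C
  have hCeq : ∀ a b : ℝ, C a b = ∑ s ∈ Finset.range (k / r),
      min ((r : ℝ) * (ρ * a) + ((d : ℝ) - r * s) * b) ((r : ℝ) * a) := fun _ _ => rfl
  obtain ⟨m, hm⟩ := hrk
  have hr0 : 0 < r := hr
  have hdivr : k / r = m := by rw [hm, Nat.mul_div_cancel_left m hr0]
  have hm1 : 1 ≤ m := by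
    rcases Nat.eq_zero_or_pos m with h | h
    · subst h; simp at hm; omega
    · exact h
  have hkR : (k : ℝ) = r * m := by exact_mod_cast hm
  have hkR0 : (0:ℝ) < k := by exact_mod_cast hk
  have hkne : (k:ℝ) ≠ 0 := ne_of_gt hkR0
  have hrR0 : (0:ℝ) < r := by exact_mod_cast hr0
  have hd0 : 0 < d := lt_of_lt_of_le hk hkd
  have hdR0 : (0:ℝ) < d := by exact_mod_cast hd0
  have hkdR : (k:ℝ) ≤ d := by exact_mod_cast hkd
  set D : ℝ := (d:ℝ) - k + r with hD
  have hD0 : 0 < D := by rw [hD]; linarith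
  have hDne : D ≠ 0 := ne_of_gt hD0
  have hρ' : 0 < 1 - ρ := by linarith
  set α : ℝ := M / k with hα
  have hkα : (k:ℝ) * α = M := by rw [hα]; field_simp
  have part1 : ∀ α' β : ℝ, 0 ≤ β → M ≤ C α' β → M / k ≤ α' := by
    intro α' β _ hC
    have hle : C α' β ≤ (k:ℝ) * α' := by
      rw [hCeq]
      calc ∑ s ∈ Finset.range (k / r),
            min ((r : ℝ) * (ρ * α') + ((d : ℝ) - r * s) * β) ((r : ℝ) * α')
          ≤ ∑ _s ∈ Finset.range (k / r), (r:ℝ) * α' :=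
            Finset.sum_le_sum fun s _ => min_le_right _ _
        _ = ((k/r : ℕ) : ℝ) * ((r:ℝ) * α') := by
            rw [Finset.sum_const, Finset.card_range, nsmul_eq_mul]
        _ = (k:ℝ) * α' := by rw [hdivr, hkR]; ring
    rw [div_le_iff₀ hkR0]
    nlinarith [hC.trans hle]
  refine ⟨part1, ?_, ?_⟩
  · -- membership
    set β₀ : ℝ := M * r * (1 - ρ) / (k * D) with hβ₀
    have hβ₀0 : 0 ≤ β₀ := by
      apply div_nonneg
      · nlinarith [mul_pos (mul_pos hM hrR0) hρ']
      · positivity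
    have hDβ₀ : D * β₀ = r * (1 - ρ) * α := by
      rw [hβ₀, hα]; field_simp
    refine ⟨β₀, hβ₀0, ?_, ?_⟩
    · rw [hβ₀]; field_simp
    · rw [hCeq, hdivr]
      have heq : ∀ s ∈ Finset.range m,
          min ((r : ℝ) * (ρ * α) + ((d : ℝ) - r * s) * β₀) ((r : ℝ) * α) = (r:ℝ) * α := by
        intro s hs
        rw [min_eq_right]
        have hs' : (s:ℝ) ≤ (m:ℝ) - 1 := by
          have h1 : s + 1 ≤ m := Finset.mem_range.mp hs
          have h2 := (Nat.cast_le (α := ℝ)).mpr h1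
          push_cast at h2
          linarith
        have h1 : D ≤ (d:ℝ) - r * s := by
          rw [hD]
          nlinarith [mul_le_mul_of_nonneg_left hs' hrR0.le]
        have h2 : D * β₀ ≤ ((d:ℝ) - r * s) * β₀ := mul_le_mul_of_nonneg_right h1 hβ₀0
        nlinarith [hDβ₀]
      rw [Finset.sum_congr rfl heq, Finset.sum_const, Finset.card_range, nsmul_eq_mul]
      have hmm : (m:ℝ) * ((r:ℝ) * α) = M := by
        rw [← hkα, hkR]; ring
      linarith
  · -- lower bound
    rintro γ ⟨β, hβ0, rfl, hC⟩
    rw [hCeq, hdivr] at hC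
    obtain ⟨m', rfl⟩ : ∃ m', m = m' + 1 := ⟨m - 1, by omega⟩
    rw [Finset.sum_range_succ] at hC
    have hbound1 : ∑ s ∈ Finset.range m',
        min ((r : ℝ) * (ρ * α) + ((d : ℝ) - r * s) * β) ((r : ℝ) * α)
        ≤ (m':ℝ) * ((r:ℝ) * α) := by
      calc ∑ s ∈ Finset.range m',
            min ((r : ℝ) * (ρ * α) + ((d : ℝ) - r * s) * β) ((r : ℝ) * α)
          ≤ ∑ _s ∈ Finset.range m', (r:ℝ) * α :=
            Finset.sum_le_sum fun s _ => min_le_right _ _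
        _ = (m':ℝ) * ((r:ℝ) * α) := by
            rw [Finset.sum_const, Finset.card_range, nsmul_eq_mul]
    have hDm : (d:ℝ) - r * (m':ℕ) = D := by
      rw [hD, hkR]; push_cast; ring
    have hlast : min ((r : ℝ) * (ρ * α) + ((d : ℝ) - r * (m':ℕ)) * β) ((r : ℝ) * α)
        ≤ (r:ℝ) * (ρ * α) + D * β := by
      rw [hDm]; exact min_le_left _ _
    have hM' : M ≤ (m':ℝ) * ((r:ℝ) * α) + ((r:ℝ) * (ρ * α) + D * β) := by linarith
    have hmrα : ((m':ℝ) + 1) * ((r:ℝ) * α) = M := by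
      rw [← hkα, hkR]; push_cast; try ring
    have h3 : (m':ℝ) * ((r:ℝ) * α) = M - (r:ℝ) * α := by linear_combination hmrα
    have hkey : (r:ℝ) * α * (1 - ρ) ≤ D * β := by nlinarith [hM', h3]
    have h5 : (r:ℝ) * M * (1 - ρ) = (k:ℝ) * ((r:ℝ) * α * (1 - ρ)) := by
      rw [hα]; field_simp
    have h6 : (r:ℝ) * M * (1 - ρ) ≤ (k:ℝ) * (D * β) := by
      rw [h5]; exact mul_le_mul_of_nonneg_left hkey hkR0.le
    rw [div_le_iff₀ (mul_pos hkR0 hD0)]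
    nlinarith [mul_le_mul_of_nonneg_left h6 hdR0.le]
end

section
/- (MBR point) Under the same cut-set constraint, the minimum feasible total repair bandwidth is γ* = 2 M r d (1−ρ) / (k(2d − (k−r)(1−ρ))), achieved with storage α* = 2 M d / (k(2d − (k−r)(1−ρ))). -/
/-- Key algebraic identity at the MBR point. -/
lemma MBR_alg (M d k r ρ m : ℝ) (hd : d ≠ 0) (hk : k ≠ 0) (hr : r ≠ 0)
    (hD : 2*d - (k-r)*(1-ρ) ≠ 0) (hm : r*m = k) :
    m*(r*(ρ*(2 * M * d / (k * (2 * d - (k - r) * (1 - ρ)))))) +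
      (m*d - r*(m*(m-1)/2))*(r*(1-ρ)*(2 * M * d / (k * (2 * d - (k - r) * (1 - ρ))))/d) = M := by
  subst hm
  have hm0 : m ≠ 0 := right_ne_zero_of_mul hk
  generalize hE : 2 * d - (r * m - r) * (1 - ρ) = E at hD ⊢
  field_simp
  rw [← hE]
  ring

/-- MBR point: under the cut-set constraint, with storage
`α* = 2Md/(k(2d − (k−r)(1−ρ)))`, the least feasible total repair bandwidth
`γ = dβ` is `γ* = 2Mrd(1−ρ)/(k(2d − (k−r)(1−ρ)))`. -/
theorem MBR_point
    (k r d : ℕ) (M : ℝ) (hM : 0 < M)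
    (hr : 1 ≤ r) (hrk : r ∣ k) (hk : 1 ≤ k) (hkd : k ≤ d)
    (ρ : ℝ) (hρ0 : 0 ≤ ρ) (hρ1 : ρ < 1) :
    let C : ℝ → ℝ → ℝ := fun α β => ∑ s ∈ Finset.range (k / r),
      min ((r : ℝ) * (ρ * α) + ((d : ℝ) - r * s) * β) ((r : ℝ) * α)
    let αstar : ℝ := 2 * M * d / (k * (2 * (d : ℝ) - ((k : ℝ) - r) * (1 - ρ)))
    IsLeast {γ : ℝ | ∃ β : ℝ, 0 ≤ β ∧ γ = d * β ∧ M ≤ C αstar β}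
      (2 * M * r * d * (1 - ρ) / (k * (2 * (d : ℝ) - ((k : ℝ) - r) * (1 - ρ)))) := by
  intro C αstar
  set m : ℕ := k / r with hmdef
  have hm : r * m = k := Nat.mul_div_cancel' hrk
  have hm1 : 1 ≤ m := Nat.one_le_div_iff (by omega) |>.mpr (Nat.le_of_dvd (by omega) hrk)
  have hmR : (r:ℝ) * m = k := by exact_mod_cast hm
  have hd0 : (0:ℝ) < d := by exact_mod_cast (lt_of_lt_of_le (by omega : 0 < k) hkd)
  have hk0 : (0:ℝ) < k := by exact_mod_cast (by omega : 0 < k)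
  have hr0 : (0:ℝ) < r := by exact_mod_cast hr
  have hrk' : (r:ℝ) ≤ k := by exact_mod_cast Nat.le_of_dvd (by omega) hrk
  have hkd' : (k:ℝ) ≤ d := by exact_mod_cast hkd
  have hρ1' : (0:ℝ) < 1 - ρ := by linarith
  have hD : (0:ℝ) < 2 * (d:ℝ) - ((k:ℝ) - r) * (1 - ρ) := by nlinarith
  have hα : 0 < αstar := by
    apply div_pos (by positivity) (mul_pos hk0 hD)
  set βstar : ℝ := (r:ℝ) * (1 - ρ) * αstar / d with hβdef
  have hβ0 : 0 ≤ βstar := by positivity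
  have hdβ : (d:ℝ) * βstar = (r:ℝ) * (1 - ρ) * αstar := by
    rw [hβdef]; field_simp
  have hγeq : 2 * M * r * d * (1 - ρ) / (k * (2 * (d : ℝ) - ((k : ℝ) - r) * (1 - ρ)))
      = (d:ℝ) * βstar := by
    rw [hdβ]; show _ = (r:ℝ)*(1-ρ)* (2 * M * d / (k * (2 * (d : ℝ) - ((k : ℝ) - r) * (1 - ρ))))
    field_simp
  have hgauss : ∑ s ∈ Finset.range m, (s:ℝ) = (m:ℝ)*((m:ℝ)-1)/2 := by
    have h2 := Finset.sum_range_id_mul_two m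
    have : ((∑ s ∈ Finset.range m, s : ℕ) : ℝ) * 2 = (m:ℝ) * ((m:ℝ) - 1) := by
      rw [← Nat.cast_ofNat, ← Nat.cast_mul, h2]
      push_cast [Nat.cast_sub hm1]
      ring
    push_cast at this ⊢
    linarith
  have hC : ∀ β : ℝ, (∑ s ∈ Finset.range m, ((r:ℝ) * (ρ * αstar) + ((d:ℝ) - r * s) * β))
      = (m:ℝ)*((r:ℝ)*(ρ*αstar)) + ((m:ℝ)*d - r*((m:ℝ)*((m:ℝ)-1)/2))*β := by
    intro β
    rw [Finset.sum_add_distrib, Finset.sum_const, Finset.card_range]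
    have : ∑ s ∈ Finset.range m, ((d:ℝ) - r * s) * β
        = ((m:ℝ)*d - r*((m:ℝ)*((m:ℝ)-1)/2))*β := by
      rw [← Finset.sum_mul]
      congr 1
      rw [Finset.sum_sub_distrib, Finset.sum_const, Finset.card_range, ← Finset.mul_sum, hgauss]
      push_cast; ring
    rw [this]; push_cast; ring
  have hKey : (m:ℝ)*((r:ℝ)*(ρ*αstar)) + ((m:ℝ)*d - r*((m:ℝ)*((m:ℝ)-1)/2))*βstar = M := by
    have := MBR_alg M d k r ρ m hd0.ne' hk0.ne' hr0.ne' hD.ne' hmR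
    rw [hβdef]
    convert this using 2
  have hS : 0 < (m:ℝ)*d - r*((m:ℝ)*((m:ℝ)-1)/2) := by
    have hm1' : (1:ℝ) ≤ m := by exact_mod_cast hm1
    nlinarith [mul_nonneg (sub_nonneg.mpr hkd') (sub_nonneg.mpr hm1')]
  constructor
  · refine ⟨βstar, hβ0, hγeq, ?_⟩
    have hmin : ∀ s ∈ Finset.range m,
        min ((r : ℝ) * (ρ * αstar) + ((d : ℝ) - r * s) * βstar) ((r : ℝ) * αstar)
        = (r : ℝ) * (ρ * αstar) + ((d : ℝ) - r * s) * βstar := by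
      intro s hs
      apply min_eq_left
      have hsd : ((d:ℝ) - r * s) * βstar ≤ (d:ℝ) * βstar := by
        apply mul_le_mul_of_nonneg_right _ hβ0
        have : (0:ℝ) ≤ (r:ℝ) * s := by positivity
        linarith
      rw [hdβ] at hsd
      nlinarith
    show M ≤ ∑ s ∈ Finset.range m, _
    rw [Finset.sum_congr rfl hmin, hC βstar, hKey]
  · rintro γ ⟨β, hβ, rfl, hfeas⟩
    have hle : (C αstar β : ℝ) ≤ (m:ℝ)*((r:ℝ)*(ρ*αstar)) + ((m:ℝ)*d - r*((m:ℝ)*((m:ℝ)-1)/2))*β := by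
      rw [← hC β]
      exact Finset.sum_le_sum fun s _ => min_le_left _ _
    have hββ : βstar ≤ β := by
      have h1 : M ≤ (m:ℝ)*((r:ℝ)*(ρ*αstar)) + ((m:ℝ)*d - r*((m:ℝ)*((m:ℝ)-1)/2))*β :=
        le_trans hfeas hle
      have h2 : ((m:ℝ)*d - r*((m:ℝ)*((m:ℝ)-1)/2)) * βstar
          ≤ ((m:ℝ)*d - r*((m:ℝ)*((m:ℝ)-1)/2)) * β := by linarith
      exact (mul_le_mul_iff_right₀ hS).mp h2
    rw [hγeq]
    exact mul_le_mul_of_nonneg_left hββ hd0.le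
end
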